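/- arXiv:2402.04383 — 2 statements merged into one kernel-verified Lean document; each statement's English description precedes it below -/
import Mathlib

section
/- Theorem 1: Let σ be L-Lipschitz, à symmetric with nonnegative entries, and let h_i = σ(Σ_j Ã_ij c_j) with ||c_j||_∞ ≤ δ. Suppose the group-averaged differences d_j := (1/s)Σ_{i∈S_k}Ã_ij - (1/(N-s))Σ_{i∉S_k}Ã_ij satisfy d_j ≥ 0 for j ∈ S_k and d_j ≤ 0 for j ∉ S_k, and that each aggregated vector z_i = Σ_j Ã_ij c_j deviates from the overall mean of the z's by at most Δ_z in sup-norm. Then ||(1/s) Σ_{i∈S_k} h_i - (1/(N-s)) Σ_{i∉S_k} h_i||_2 ≤ L( δ√F ( |p_ω/s - p_χ/(N-s)| + |(T - p_ω - 2p_χ)/(N-s) - p_χ/s| ) + 2√N Δ_z ). -/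
/-!
The difference of the group means of the aggregated vectors `z i = ∑ j, Ã i j • c j` is
`∑ j, d j • c j`, so its Euclidean norm is at most `δ √F ∑ j, |d j|`. Because `d` is nonnegative
on `S` and nonpositive off `S`, `∑ j, |d j| = |∑ j ∈ S, d j| + |∑ j ∉ S, d j|`, and by the
symmetry of `Ã` these two sums are `p_ω/s - p_χ/(N-s)` and `p_χ/s - (T - p_ω - 2p_χ)/(N-s)`
(the complement block is `T - p_ω - 2p_χ` because both off-diagonal blocks equal `p_χ`).
The Lipschitz-mean lemma then transfers the bound from `z` to `h`.
-/

open Finset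

theorem EuclideanSpace.norm_le_sqrt_card_mul {ι : Type*} [Fintype ι] {x : EuclideanSpace ℝ ι}
    {δ : ℝ} (hx : ∀ f, |x f| ≤ δ) : ‖x‖ ≤ √(Fintype.card ι) * δ := by
  cases isEmpty_or_nonempty ι
  · simp [Subsingleton.elim x 0]
  have hδ : 0 ≤ δ := (abs_nonneg _).trans (hx (Classical.arbitrary ι))
  rw [EuclideanSpace.norm_eq, ← Real.sqrt_sq hδ, ← Real.sqrt_mul (Nat.cast_nonneg _)]
  gcongr
  calc ∑ f, ‖x f‖ ^ 2 ≤ ∑ _f : ι, δ ^ 2 :=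
        sum_le_sum fun f _ => by
          rw [Real.norm_eq_abs]; exact pow_le_pow_left₀ (abs_nonneg _) (hx f) 2
    _ = Fintype.card ι * δ ^ 2 := by simp

theorem EuclideanSpace.norm_sum_smul_le {ι κ : Type*} [Fintype ι] [Fintype κ]
    {c : ι → EuclideanSpace ℝ κ} {δ : ℝ} (hc : ∀ j f, |c j f| ≤ δ) (d : ι → ℝ) :
    ‖∑ j, d j • c j‖ ≤ δ * √(Fintype.card κ) * ∑ j, |d j| := by
  calc ‖∑ j, d j • c j‖ ≤ ∑ j, |d j| * ‖c j‖ := by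
        simpa only [norm_smul, Real.norm_eq_abs] using norm_sum_le univ fun j => d j • c j
    _ ≤ ∑ j, |d j| * (√(Fintype.card κ) * δ) :=
        sum_le_sum fun j _ => by gcongr; exact norm_le_sqrt_card_mul (hc j)
    _ = δ * √(Fintype.card κ) * ∑ j, |d j| := by rw [← sum_mul]; ring

theorem Finset.sum_sum_smul_comm {ι κ M : Type*} [Fintype κ] [AddCommMonoid M] [Module ℝ M]
    (T : Finset ι) (A : ι → κ → ℝ) (c : κ → M) :
    ∑ i ∈ T, ∑ j, A i j • c j = ∑ j, (∑ i ∈ T, A i j) • c j := by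
  rw [sum_comm]
  simp only [sum_smul]

theorem Matrix.IsSymm.sum_sum_comm {ι : Type*} {A : Matrix ι ι ℝ} (hA : A.IsSymm)
    (U V : Finset ι) : ∑ i ∈ U, ∑ j ∈ V, A i j = ∑ i ∈ V, ∑ j ∈ U, A i j :=
  sum_comm.trans (sum_congr rfl fun i _ => sum_congr rfl fun j _ => hA.apply i j)

theorem Finset.sum_sum_eq_add_blocks {ι : Type*} [Fintype ι] [DecidableEq ι] (A : ι → ι → ℝ)
    (S : Finset ι) :
    ∑ i, ∑ j, A i j = ∑ i ∈ S, ∑ j ∈ S, A i j + ∑ i ∈ S, ∑ j ∈ Sᶜ, A i j +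
      (∑ i ∈ Sᶜ, ∑ j ∈ S, A i j + ∑ i ∈ Sᶜ, ∑ j ∈ Sᶜ, A i j) := by
  simp only [sum_add_sum_compl, ← sum_add_distrib]

theorem Finset.sum_abs_eq_of_sign {ι : Type*} [Fintype ι] [DecidableEq ι] {S : Finset ι}
    {d : ι → ℝ} (hin : ∀ j ∈ S, 0 ≤ d j) (hout : ∀ j ∈ Sᶜ, d j ≤ 0) :
    ∑ j, |d j| = |∑ j ∈ S, d j| + |∑ j ∈ Sᶜ, d j| := by
  rw [← sum_add_sum_compl S, abs_of_nonneg (sum_nonneg hin), abs_of_nonpos (sum_nonpos hout),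
    ← sum_neg_distrib]
  congr 1
  · exact sum_congr rfl fun j hj => abs_of_nonneg (hin j hj)
  · exact sum_congr rfl fun j hj => abs_of_nonpos (hout j hj)

section GroupMeanGap

variable {ι : Type*} [Fintype ι] [DecidableEq ι]

/-- The paper's `d_j`, with the group sizes `s` and `N - s` passed as `s` and `t`. -/
noncomputable def groupMeanGap (A : Matrix ι ι ℝ) (S : Finset ι) (s t : ℝ) (j : ι) : ℝ :=
  s⁻¹ * ∑ i ∈ S, A i j - t⁻¹ * ∑ i ∈ Sᶜ, A i j

theorem groupMean_sub_eq_sum_groupMeanGap_smul {M : Type*} [AddCommGroup M] [Module ℝ M]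
    (A : Matrix ι ι ℝ) (S : Finset ι) (s t : ℝ) (c : ι → M) :
    s⁻¹ • ∑ i ∈ S, ∑ j, A i j • c j - t⁻¹ • ∑ i ∈ Sᶜ, ∑ j, A i j • c j =
      ∑ j, groupMeanGap A S s t j • c j := by
  simp only [sum_sum_smul_comm, smul_sum, smul_smul, ← sum_sub_distrib, ← sub_smul, mul_sum,
    groupMeanGap]

theorem sum_groupMeanGap_of_mem {A : Matrix ι ι ℝ} (hA : A.IsSymm) (S : Finset ι) (s t : ℝ) :
    ∑ j ∈ S, groupMeanGap A S s t j =
      (∑ i ∈ S, ∑ j ∈ S, A i j) / s - (∑ i ∈ S, ∑ j ∈ Sᶜ, A i j) / t := by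
  simp only [groupMeanGap, sum_sub_distrib, ← mul_sum]
  rw [sum_comm (s := S) (t := S), sum_comm (s := S) (t := Sᶜ), hA.sum_sum_comm Sᶜ S]
  ring

theorem sum_groupMeanGap_of_mem_compl {A : Matrix ι ι ℝ} (hA : A.IsSymm) (S : Finset ι)
    (s t : ℝ) :
    ∑ j ∈ Sᶜ, groupMeanGap A S s t j =
      -(((∑ i, ∑ j, A i j) - (∑ i ∈ S, ∑ j ∈ S, A i j) - 2 * (∑ i ∈ S, ∑ j ∈ Sᶜ, A i j)) / t -
        (∑ i ∈ S, ∑ j ∈ Sᶜ, A i j) / s) := by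
  simp only [groupMeanGap, sum_sub_distrib, ← mul_sum]
  rw [sum_comm (s := Sᶜ) (t := S), sum_comm (s := Sᶜ) (t := Sᶜ), sum_sum_eq_add_blocks A S,
    hA.sum_sum_comm Sᶜ S]
  ring

end GroupMeanGap

theorem theorem_fairwire_general (N F : ℕ)
    (L : ℝ) (hL : 0 ≤ L)
    (A : Matrix (Fin N) (Fin N) ℝ)
    (hsymm : A.IsSymm)
    (S : Finset (Fin N))
    (c : Fin N → EuclideanSpace ℝ (Fin F)) (δ : ℝ)
    (hc : ∀ j f, |c j f| ≤ δ)
    -- aggregated representations z i = ∑ j, A i j • c j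
    (z : Fin N → EuclideanSpace ℝ (Fin F))
    (hz : ∀ i, z i = ∑ j, A i j • c j)
    (h : Fin N → EuclideanSpace ℝ (Fin F))
    -- sign conditions on the group-averaged differences (Assumptions A2, A3)
    (hsign_in : ∀ j ∈ S,
      0 ≤ (S.card : ℝ)⁻¹ * ∑ i ∈ S, A i j - ((N : ℝ) - S.card)⁻¹ * ∑ i ∈ Sᶜ, A i j)
    (hsign_out : ∀ j ∈ Sᶜ,
      (S.card : ℝ)⁻¹ * ∑ i ∈ S, A i j - ((N : ℝ) - S.card)⁻¹ * ∑ i ∈ Sᶜ, A i j ≤ 0)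
    -- deviation of each z i from the overall mean of the z's, in sup-norm
    (Δz : ℝ)
    -- Lipschitz-plus-mean-deviation lemma (Lemma A.1)
    (hlem : ‖((S.card : ℝ)⁻¹ • ∑ i ∈ S, h i) - (((N : ℝ) - S.card)⁻¹ • ∑ i ∈ Sᶜ, h i)‖ ≤
      L * ‖((S.card : ℝ)⁻¹ • ∑ i ∈ S, z i) - (((N : ℝ) - S.card)⁻¹ • ∑ i ∈ Sᶜ, z i)‖ +
        2 * L * Real.sqrt N * Δz) :
    ‖((S.card : ℝ)⁻¹ • ∑ i ∈ S, h i) - (((N : ℝ) - S.card)⁻¹ • ∑ i ∈ Sᶜ, h i)‖ ≤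
      L * (δ * Real.sqrt F *
          (|(∑ i ∈ S, ∑ j ∈ S, A i j) / (S.card : ℝ) -
              (∑ i ∈ S, ∑ j ∈ Sᶜ, A i j) / ((N : ℝ) - S.card)| +
            |((∑ i, ∑ j, A i j) - (∑ i ∈ S, ∑ j ∈ S, A i j) -
                  2 * (∑ i ∈ S, ∑ j ∈ Sᶜ, A i j)) / ((N : ℝ) - S.card) -
              (∑ i ∈ S, ∑ j ∈ Sᶜ, A i j) / (S.card : ℝ)|) +
        2 * Real.sqrt N * Δz) := by
  set d := groupMeanGap A S S.card (N - S.card)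
  have hz_gap : (S.card : ℝ)⁻¹ • ∑ i ∈ S, z i - ((N : ℝ) - S.card)⁻¹ • ∑ i ∈ Sᶜ, z i =
      ∑ j, d j • c j := by
    simp only [hz]
    exact groupMean_sub_eq_sum_groupMeanGap_smul A S _ _ c
  calc _ ≤ L * ‖(S.card : ℝ)⁻¹ • ∑ i ∈ S, z i - ((N : ℝ) - S.card)⁻¹ • ∑ i ∈ Sᶜ, z i‖ +
        2 * L * Real.sqrt N * Δz := hlem
    _ ≤ L * (δ * Real.sqrt F * ∑ j, |d j|) + 2 * L * Real.sqrt N * Δz := by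
        rw [hz_gap]
        gcongr
        simpa only [Fintype.card_fin] using EuclideanSpace.norm_sum_smul_le hc d
    _ = _ := by
        rw [sum_abs_eq_of_sign (d := d) hsign_in hsign_out, sum_groupMeanGap_of_mem hsymm,
          sum_groupMeanGap_of_mem_compl hsymm, abs_neg]
        ring

/-- Theorem 1: disparity of mean GNN-layer outputs between a
sensitive group `S` (size `s`) and its complement is bounded by
`L(δ√F(α₁ + α₂) + 2√N Δ_z)`. -/
theorem theorem_fairwire (N F : ℕ)
    (σ : ℝ → ℝ) (L : ℝ) (hL : 0 ≤ L)
    (hσ : ∀ x y : ℝ, |σ x - σ y| ≤ L * |x - y|)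
    (A : Matrix (Fin N) (Fin N) ℝ)
    (hsymm : A.IsSymm) (hnonneg : ∀ i j, 0 ≤ A i j)
    (S : Finset (Fin N)) (hS : S.Nonempty) (hS' : S ≠ Finset.univ)
    (c : Fin N → EuclideanSpace ℝ (Fin F)) (δ : ℝ)
    (hc : ∀ j f, |c j f| ≤ δ)
    -- aggregated representations z i = ∑ j, A i j • c j
    (z : Fin N → EuclideanSpace ℝ (Fin F))
    (hz : ∀ i, z i = ∑ j, A i j • c j)
    -- layer outputs h i = σ applied coordinatewise to z i
    (h : Fin N → EuclideanSpace ℝ (Fin F))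
    (hh : ∀ i f, h i f = σ (z i f))
    -- sign conditions on the group-averaged differences (Assumptions A2, A3)
    (hsign_in : ∀ j ∈ S,
      0 ≤ (S.card : ℝ)⁻¹ * ∑ i ∈ S, A i j - ((N : ℝ) - S.card)⁻¹ * ∑ i ∈ Sᶜ, A i j)
    (hsign_out : ∀ j ∈ Sᶜ,
      (S.card : ℝ)⁻¹ * ∑ i ∈ S, A i j - ((N : ℝ) - S.card)⁻¹ * ∑ i ∈ Sᶜ, A i j ≤ 0)
    -- deviation of each z i from the overall mean of the z's, in sup-norm
    (Δz : ℝ)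
    (hΔ : ∀ i f, |z i f - ((N : ℝ)⁻¹ • ∑ i', z i') f| ≤ Δz)
    -- Lipschitz-plus-mean-deviation lemma (Lemma A.1)
    (hlem : ‖((S.card : ℝ)⁻¹ • ∑ i ∈ S, h i) - (((N : ℝ) - S.card)⁻¹ • ∑ i ∈ Sᶜ, h i)‖ ≤
      L * ‖((S.card : ℝ)⁻¹ • ∑ i ∈ S, z i) - (((N : ℝ) - S.card)⁻¹ • ∑ i ∈ Sᶜ, z i)‖ +
        2 * L * Real.sqrt N * Δz) :
    ‖((S.card : ℝ)⁻¹ • ∑ i ∈ S, h i) - (((N : ℝ) - S.card)⁻¹ • ∑ i ∈ Sᶜ, h i)‖ ≤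
      L * (δ * Real.sqrt F *
          (|(∑ i ∈ S, ∑ j ∈ S, A i j) / (S.card : ℝ) -
              (∑ i ∈ S, ∑ j ∈ Sᶜ, A i j) / ((N : ℝ) - S.card)| +
            |((∑ i, ∑ j, A i j) - (∑ i ∈ S, ∑ j ∈ S, A i j) -
                  2 * (∑ i ∈ S, ∑ j ∈ Sᶜ, A i j)) / ((N : ℝ) - S.card) -
              (∑ i ∈ S, ∑ j ∈ Sᶜ, A i j) / (S.card : ℝ)|) +
        2 * Real.sqrt N * Δz) :=
  theorem_fairwire_general N F L hL A hsymm S c δ hc z hz h hsign_in hsign_out Δz hlem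
end

section
/- Corollary 1: Under the hypotheses of Theorem 1 and Proposition 1 combined, Δ_SP ≤ Σ_{k=1}^K (s_k/N) · q · ||Σ||_op · L( δ√F (α_1(k) + α_2(k)) + 2√N Δ_z ), where α_1(k) = |p_ω(k)/s_k - p_χ(k)/(N-s_k)| and α_2(k) = |(T - p_ω(k) - 2p_χ(k))/(N-s_k) - p_χ(k)/s_k|. -/
open scoped RealInnerProductSpace
open Finset

/-- Corollary 1: composing Theorem 1 and Proposition 1,
statistical parity is bounded by
`Σ_k (s_k/N) q ‖Σ‖ L(δ√F(α₁(k)+α₂(k)) + 2√N Δ_z)`. -/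
theorem corollary_fairwire (N F K : ℕ)
    (A : Matrix (Fin N) (Fin N) ℝ)
    (hsymm : A.IsSymm) (hnonneg : ∀ i j, 0 ≤ A i j)
    -- sensitive groups partitioning the nodes
    (Sg : Fin K → Finset (Fin N))
    (hne : ∀ k, (Sg k).Nonempty) (hproper : ∀ k, Sg k ≠ Finset.univ)
    (hdisj : ∀ k l, k ≠ l → Disjoint (Sg k) (Sg l))
    (hcover : ∀ i, ∃ k, i ∈ Sg k)
    -- final-layer GNN representations, bounded in norm
    (h : Fin N → EuclideanSpace ℝ (Fin F)) (q : ℝ) (hq : ∀ i, ‖h i‖ ≤ q)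
    (hq0 : 0 ≤ q)
    (Sig : EuclideanSpace ℝ (Fin F) →L[ℝ] EuclideanSpace ℝ (Fin F))
    (L δ Δz : ℝ) (hL : 0 ≤ L) (hδ : 0 ≤ δ) (hΔz : 0 ≤ Δz)
    -- per-group mean representations
    (p qv : Fin K → EuclideanSpace ℝ (Fin F))
    (hp : ∀ k, p k = ((Sg k).card : ℝ)⁻¹ • ∑ i ∈ Sg k, h i)
    (hqv : ∀ k, qv k = (((N : ℝ) - (Sg k).card))⁻¹ • ∑ i ∈ (Sg k)ᶜ, h i)
    -- per-group disparity bound from Theorem 1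
    (hthm : ∀ k, ‖p k - qv k‖ ≤
      L * (δ * Real.sqrt F *
          (|(∑ i ∈ Sg k, ∑ j ∈ Sg k, A i j) / ((Sg k).card : ℝ) -
              (∑ i ∈ Sg k, ∑ j ∈ (Sg k)ᶜ, A i j) / ((N : ℝ) - (Sg k).card)| +
            |((∑ i, ∑ j, A i j) - (∑ i ∈ Sg k, ∑ j ∈ Sg k, A i j) -
                  2 * (∑ i ∈ Sg k, ∑ j ∈ (Sg k)ᶜ, A i j)) / ((N : ℝ) - (Sg k).card) -
              (∑ i ∈ Sg k, ∑ j ∈ (Sg k)ᶜ, A i j) / ((Sg k).card : ℝ)|) +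
        2 * Real.sqrt N * Δz)) :
    -- statistical parity bound
    |∑ k, ((Sg k).card : ℝ) / N * (⟪p k, Sig (p k)⟫ - ⟪p k, Sig (qv k)⟫)| ≤
      ∑ k, ((Sg k).card : ℝ) / N * q * ‖Sig‖ *
        (L * (δ * Real.sqrt F *
            (|(∑ i ∈ Sg k, ∑ j ∈ Sg k, A i j) / ((Sg k).card : ℝ) -
                (∑ i ∈ Sg k, ∑ j ∈ (Sg k)ᶜ, A i j) / ((N : ℝ) - (Sg k).card)| +
              |((∑ i, ∑ j, A i j) - (∑ i ∈ Sg k, ∑ j ∈ Sg k, A i j) -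
                    2 * (∑ i ∈ Sg k, ∑ j ∈ (Sg k)ᶜ, A i j)) / ((N : ℝ) - (Sg k).card) -
                (∑ i ∈ Sg k, ∑ j ∈ (Sg k)ᶜ, A i j) / ((Sg k).card : ℝ)|) +
          2 * Real.sqrt N * Δz)) := by

  calc |∑ k, ((Sg k).card : ℝ) / N * (⟪p k, Sig (p k)⟫ - ⟪p k, Sig (qv k)⟫)|
      ≤ ∑ k, |((Sg k).card : ℝ) / N * (⟪p k, Sig (p k)⟫ - ⟪p k, Sig (qv k)⟫)| :=
        Finset.abs_sum_le_sum_abs _ _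
    _ ≤ _ := by
        apply Finset.sum_le_sum
        intro k _
        have hpq : ‖p k‖ ≤ q := by
          rw [hp k]
          have hcard : 0 < ((Sg k).card : ℝ) := by
            exact_mod_cast Finset.card_pos.mpr (hne k)
          calc ‖((Sg k).card : ℝ)⁻¹ • ∑ i ∈ Sg k, h i‖
              = ((Sg k).card : ℝ)⁻¹ * ‖∑ i ∈ Sg k, h i‖ := by
                rw [norm_smul, Real.norm_eq_abs, abs_of_pos (by positivity)]
            _ ≤ ((Sg k).card : ℝ)⁻¹ * (((Sg k).card : ℝ) * q) := by
                gcongr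
                calc ‖∑ i ∈ Sg k, h i‖ ≤ ∑ i ∈ Sg k, ‖h i‖ := norm_sum_le _ _
                  _ ≤ ∑ _i ∈ Sg k, q := Finset.sum_le_sum fun i _ => hq i
                  _ = ((Sg k).card : ℝ) * q := by simp [mul_comm]
            _ = q := by field_simp
        have key : |⟪p k, Sig (p k)⟫ - ⟪p k, Sig (qv k)⟫| ≤ q * ‖Sig‖ * ‖p k - qv k‖ := by
          have : ⟪p k, Sig (p k)⟫ - ⟪p k, Sig (qv k)⟫ = ⟪p k, Sig (p k - qv k)⟫ := by
            rw [map_sub, inner_sub_right]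
          rw [this]
          calc |⟪p k, Sig (p k - qv k)⟫| ≤ ‖p k‖ * ‖Sig (p k - qv k)‖ :=
                abs_real_inner_le_norm _ _
            _ ≤ ‖p k‖ * (‖Sig‖ * ‖p k - qv k‖) := by
                gcongr; exact Sig.le_opNorm _
            _ ≤ q * (‖Sig‖ * ‖p k - qv k‖) := by gcongr
            _ = q * ‖Sig‖ * ‖p k - qv k‖ := by ring
        have hfrac : (0:ℝ) ≤ ((Sg k).card : ℝ) / N := by positivity
        rw [abs_mul, abs_div, abs_of_nonneg (Nat.cast_nonneg _),
          abs_of_nonneg (Nat.cast_nonneg _)]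
        have h2 := hthm k
        have hnn : (0:ℝ) ≤ q * ‖Sig‖ := by positivity
        calc ((Sg k).card : ℝ) / N * |⟪p k, Sig (p k)⟫ - ⟪p k, Sig (qv k)⟫|
            ≤ ((Sg k).card : ℝ) / N * (q * ‖Sig‖ * ‖p k - qv k‖) := by gcongr
          _ ≤ ((Sg k).card : ℝ) / N * (q * ‖Sig‖ *
              (L * (δ * Real.sqrt F *
                (|(∑ i ∈ Sg k, ∑ j ∈ Sg k, A i j) / ((Sg k).card : ℝ) -
                    (∑ i ∈ Sg k, ∑ j ∈ (Sg k)ᶜ, A i j) / ((N : ℝ) - (Sg k).card)| +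
                  |((∑ i, ∑ j, A i j) - (∑ i ∈ Sg k, ∑ j ∈ Sg k, A i j) -
                        2 * (∑ i ∈ Sg k, ∑ j ∈ (Sg k)ᶜ, A i j)) / ((N : ℝ) - (Sg k).card) -
                    (∑ i ∈ Sg k, ∑ j ∈ (Sg k)ᶜ, A i j) / ((Sg k).card : ℝ)|) +
                2 * Real.sqrt N * Δz))) := by
              have := mul_le_mul_of_nonneg_left h2 hnn
              exact mul_le_mul_of_nonneg_left this hfrac
          _ = _ := by ring
end
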